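/- Let n ≥ 2 and i ∈ [n-1]. The affine dimension of F_i^+ := conv{v_J : J ⊆ [n-1], i ∈ J} equals n−2, and the affine dimension of F_i^- := conv{v_J : J ⊆ [n-1], i ∉ J} equals n−2; that is, the vector span of the differences of points of each of these convex hulls has dimension n−2 over ℝ. -/

import Mathlib

open Matrix

attribute [local instance] Classical.propDecidable

noncomputable section

namespace PetersonPaper

/-- The natural number `c` (0-based; encoding the 1-based element `c+1`) belongs to
`J ⊆ [n-1]`. -/
def memJ (n : ℕ) (J : Set (Fin (n-1))) (c : ℕ) : Prop :=
  ∃ h : c < n - 1, (⟨c, h⟩ : Fin (n-1)) ∈ J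

/-- The (0-based) first element of the maximal interval of consecutive integers of
`J` containing `i ∈ J`. -/
def compStart (n : ℕ) (J : Set (Fin (n-1))) (i : Fin (n-1)) : ℕ :=
  sInf {a : ℕ | a ≤ i.1 ∧ ∀ c : ℕ, a ≤ c → c ≤ i.1 → memJ n J c}

/-- The (0-based) last element of the maximal interval of consecutive integers of
`J` containing `i ∈ J`. -/
def compEnd (n : ℕ) (J : Set (Fin (n-1))) (i : Fin (n-1)) : ℕ :=
  sSup {b : ℕ | b < n - 1 ∧ i.1 ≤ b ∧ ∀ c : ℕ, i.1 ≤ c → c ≤ b → memJ n J c}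

/-- The vertex `v_J ∈ ℝ^{n-1}`: its `i`-th coordinate is `(i+1-a)(b+1-i)` (1-based)
if `i ∈ J` with `[a,b]` the maximal interval of `J` containing `i`, and `0`
otherwise. -/
def vJ (n : ℕ) (J : Set (Fin (n-1))) : Fin (n-1) → ℝ :=
  fun i => if i ∈ J then
    (((i.1 + 1 - compStart n J i) * (compEnd n J i + 1 - i.1) : ℕ) : ℝ) else 0

/-- The standard inner product on `ℝ^{n-1}`. -/
def dotR (n : ℕ) (a b : Fin (n-1) → ℝ) : ℝ := ∑ i, a i * b i

/-- The standard basis vector `e_i` of `ℝ^{n-1}`. -/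
def stdE (n : ℕ) (i : Fin (n-1)) : Fin (n-1) → ℝ := fun j => if j = i then 1 else 0

/-- `-α^∨_i = e_{i-1} - 2 e_i + e_{i+1}` with the convention `e_0 = e_n = 0`
(1-based; `i : Fin (n-1)` encodes `i.1+1`). -/
def negAlphaV (n : ℕ) (i : Fin (n-1)) : Fin (n-1) → ℝ :=
  fun j => (if j.1 + 1 = i.1 then 1 else 0) - 2 * (if j = i then 1 else 0)
    + (if j.1 = i.1 + 1 then 1 else 0)

/-- The face `F_i^+ = conv{v_J : i ∈ J}`. -/
def Fplus (n : ℕ) (i : Fin (n-1)) : Set (Fin (n-1) → ℝ) :=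
  convexHull ℝ { v | ∃ J : Set (Fin (n-1)), i ∈ J ∧ v = vJ n J }

/-- The face `F_i^- = conv{v_J : i ∉ J}`. -/
def Fminus (n : ℕ) (i : Fin (n-1)) : Set (Fin (n-1) → ℝ) :=
  convexHull ℝ { v | ∃ J : Set (Fin (n-1)), i ∉ J ∧ v = vJ n J }

/-- The polytope `P_{n-1} = conv{v_J : J ⊆ [n-1]}`. -/
def Ppoly (n : ℕ) : Set (Fin (n-1) → ℝ) :=
  convexHull ℝ { v | ∃ J : Set (Fin (n-1)), v = vJ n J }

/-- The face `F_{K,J} = (⋂_{i ∈ K} F_i^+) ∩ (⋂_{i ∉ J} F_i^-)` of `P_{n-1}`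
(intersecting with `P_{n-1}` itself, which encodes the convention
`F_{∅,[n-1]} = P_{n-1}` and is harmless otherwise, all faces being subsets of
`P_{n-1}`). -/
def FKJ (n : ℕ) (K J : Set (Fin (n-1))) : Set (Fin (n-1) → ℝ) :=
  Ppoly n ∩ (⋂ i ∈ K, Fplus n i) ∩ (⋂ i ∈ (Jᶜ : Set (Fin (n-1))), Fminus n i)


/-!
If `i ∈ J` and `[a, b]` is the interval of `J` through `i`, put `p = i - a`, `q = b - i`; the
coordinates of `v_J` at `i - 1, i, i + 1` are `p (q + 2)`, `(p + 1)(q + 1)`, `(p + 2) q` (a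
neighbour outside `J`, or outside `[n-1]`, forces `p = 0` resp. `q = 0`), so
`⟨-α^∨_i, v_J⟩ = -2`. If `i ∉ J` then `(v_J)_i = 0`. Hence `F_i^+` and `F_i^-` lie in affine
hyperplanes. Conversely, for `j ≠ i` the differences `v_{i,j} - v_{i}` (in `F_i^+`) and
`v_{j} - v_∅` (in `F_i^-`) vanish off `{i, j}` and not at `j`, giving `n - 2` independent vectors
in each vector span.
-/

section LinearAlgebra

variable {K V : Type*} [Field K] [AddCommGroup V] [Module K V]

lemma vectorSpan_convexHull [LinearOrder K] [IsStrictOrderedRing K] (s : Set V) :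
    vectorSpan K (convexHull K s) = vectorSpan K s := by
  rw [← direction_affineSpan, affineSpan_convexHull, direction_affineSpan]

lemma vectorSpan_le_ker_of_forall_eq {s : Set V} {f : Module.Dual K V} {c : K}
    (hs : ∀ x ∈ s, f x = c) : vectorSpan K s ≤ LinearMap.ker f := by
  rw [vectorSpan_def, Submodule.span_le]
  rintro _ ⟨x, hx, y, hy, rfl⟩
  simp [hs x hx, hs y hy]

lemma finrank_vectorSpan_eq_card_of_linearIndependent [FiniteDimensional K V] {ι : Type*}
    [Fintype ι] {s : Set V} {f : Module.Dual K V} {c : K} (hf : f ≠ 0) (hs : ∀ x ∈ s, f x = c)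
    {w : ι → V} (hw : LinearIndependent K w) (hws : ∀ j, w j ∈ vectorSpan K s)
    (hcard : Fintype.card ι + 1 = Module.finrank K V) :
    Module.finrank K (vectorSpan K s) = Fintype.card ι := by
  apply le_antisymm
  · have hker := Submodule.finrank_mono (vectorSpan_le_ker_of_forall_eq hs)
    have := f.finrank_ker_add_one_of_ne_zero hf
    omega
  · calc Fintype.card ι = Module.finrank K (Submodule.span K (Set.range w)) :=
          (finrank_span_eq_card hw).symm
      _ ≤ _ := Submodule.finrank_mono (Submodule.span_le.2 (Set.range_subset_iff.2 hws))

lemma linearIndependent_of_apply_ne_zero_of_apply_eq_zero {ι κ : Type*} {w : ι → κ → K}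
    {e : ι → κ} (hdiag : ∀ j, w j (e j) ≠ 0) (hoff : ∀ j k, j ≠ k → w j (e k) = 0) :
    LinearIndependent K w := by
  rw [linearIndependent_iff']
  intro t g hg j hj
  have hj' := congrFun hg (e j)
  simp only [Finset.sum_apply, Pi.smul_apply, smul_eq_mul, Pi.zero_apply] at hj'
  rwa [Finset.sum_eq_single j (fun k _ hkj => by rw [hoff k j hkj, mul_zero])
    (fun h => absurd hj h), mul_eq_zero, or_iff_left (hdiag j)] at hj'

end LinearAlgebra

section Components

variable {n : ℕ} {J : Set (Fin (n-1))} {i j : Fin (n-1)}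

lemma memJ_val_iff : memJ n J i.1 ↔ i ∈ J :=
  ⟨fun ⟨_, h⟩ => h, fun h => ⟨i.2, h⟩⟩

lemma memJ_of_le_of_le_self (hi : i ∈ J) {c : ℕ} (h₁ : i.1 ≤ c) (h₂ : c ≤ i.1) : memJ n J c :=
  le_antisymm h₂ h₁ ▸ memJ_val_iff.2 hi

lemma compStart_le_of_forall_memJ {a : ℕ} (ha : a ≤ i.1)
    (h : ∀ c, a ≤ c → c ≤ i.1 → memJ n J c) : compStart n J i ≤ a :=
  Nat.sInf_le ⟨ha, h⟩

lemma le_compEnd_of_forall_memJ {b : ℕ} (hb : b < n - 1) (hib : i.1 ≤ b)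
    (h : ∀ c, i.1 ≤ c → c ≤ b → memJ n J c) : b ≤ compEnd n J i :=
  le_csSup (s := {b | b < n - 1 ∧ i.1 ≤ b ∧ ∀ c, i.1 ≤ c → c ≤ b → memJ n J c})
    ⟨n - 1, fun _ hx => hx.1.le⟩ ⟨hb, hib, h⟩

lemma compStart_spec (hi : i ∈ J) :
    compStart n J i ≤ i.1 ∧ ∀ c, compStart n J i ≤ c → c ≤ i.1 → memJ n J c :=
  Nat.sInf_mem (s := {a | a ≤ i.1 ∧ ∀ c, a ≤ c → c ≤ i.1 → memJ n J c})
    ⟨i.1, le_rfl, fun _ => memJ_of_le_of_le_self hi⟩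

lemma compEnd_spec (hi : i ∈ J) :
    compEnd n J i < n - 1 ∧ i.1 ≤ compEnd n J i ∧
      ∀ c, i.1 ≤ c → c ≤ compEnd n J i → memJ n J c :=
  Nat.sSup_mem (s := {b | b < n - 1 ∧ i.1 ≤ b ∧ ∀ c, i.1 ≤ c → c ≤ b → memJ n J c})
    ⟨i.1, i.2, le_rfl, fun _ => memJ_of_le_of_le_self hi⟩ ⟨n - 1, fun _ hx => hx.1.le⟩

lemma compStart_eq_self_of_notMem (hi : i ∈ J) (hj : j ∉ J) (hji : j.1 + 1 = i.1) :
    compStart n J i = i.1 := by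
  obtain ⟨hle, hmem⟩ := compStart_spec hi
  by_contra hne
  exact hj (memJ_val_iff.1 (hmem j.1 (by omega) (by omega)))

lemma compEnd_eq_self_of_notMem (hi : i ∈ J) (hj : j ∉ J) (hij : i.1 + 1 = j.1) :
    compEnd n J i = i.1 := by
  obtain ⟨-, hle, hmem⟩ := compEnd_spec hi
  by_contra hne
  exact hj (memJ_val_iff.1 (hmem j.1 (by omega) (by omega)))

lemma memJ_of_succ (hi : i ∈ J) (hj : j ∈ J) (hij : i.1 + 1 = j.1) (c : ℕ) (h₁ : i.1 ≤ c)
    (h₂ : c ≤ j.1) : memJ n J c := by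
  rcases (show c = i.1 ∨ c = j.1 by omega) with rfl | rfl
  exacts [memJ_val_iff.2 hi, memJ_val_iff.2 hj]

lemma compStart_eq_of_succ (hi : i ∈ J) (hj : j ∈ J) (hij : i.1 + 1 = j.1) :
    compStart n J j = compStart n J i := by
  obtain ⟨hi_le, hi_mem⟩ := compStart_spec hi
  obtain ⟨-, hj_mem⟩ := compStart_spec hj
  have hstart_le : compStart n J j ≤ i.1 :=
    compStart_le_of_forall_memJ (by omega) (memJ_of_succ hi hj hij)
  apply le_antisymm
  · exact compStart_le_of_forall_memJ (by omega) fun c h₁ h₂ =>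
      if hc : c ≤ i.1 then hi_mem c h₁ hc else memJ_of_le_of_le_self hj (by omega) h₂
  · exact compStart_le_of_forall_memJ hstart_le fun c h₁ h₂ => hj_mem c h₁ (by omega)

lemma compEnd_eq_of_succ (hi : i ∈ J) (hj : j ∈ J) (hij : i.1 + 1 = j.1) :
    compEnd n J i = compEnd n J j := by
  obtain ⟨hi_lt, -, hi_mem⟩ := compEnd_spec hi
  obtain ⟨hj_lt, hj_le, hj_mem⟩ := compEnd_spec hj
  have hle_end : j.1 ≤ compEnd n J i :=
    le_compEnd_of_forall_memJ j.2 (by omega) (memJ_of_succ hi hj hij)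
  apply le_antisymm
  · exact le_compEnd_of_forall_memJ hi_lt hle_end fun c h₁ h₂ => hi_mem c (by omega) h₂
  · exact le_compEnd_of_forall_memJ hj_lt (by omega) fun c h₁ h₂ =>
      if hc : j.1 ≤ c then hj_mem c hc h₂ else memJ_of_le_of_le_self hi h₁ (by omega)

end Components

section Vertices

variable {n : ℕ} {J : Set (Fin (n-1))} {i j : Fin (n-1)}

lemma vJ_of_mem (hi : i ∈ J) :
    vJ n J i = (((i.1 + 1 - compStart n J i) * (compEnd n J i + 1 - i.1) : ℕ) : ℝ) :=
  if_pos hi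

lemma vJ_of_notMem (hi : i ∉ J) : vJ n J i = 0 :=
  if_neg hi

lemma vJ_pos (hi : i ∈ J) : 0 < vJ n J i := by
  rw [vJ_of_mem hi]
  have := (compStart_spec hi).1
  have := (compEnd_spec hi).2.1
  exact_mod_cast Nat.mul_pos (by omega) (by omega)

lemma vJ_of_pred (hi : i ∈ J) (hji : j.1 + 1 = i.1) :
    vJ n J j = (((i.1 - compStart n J i) * (compEnd n J i + 2 - i.1) : ℕ) : ℝ) := by
  by_cases hj : j ∈ J
  · rw [vJ_of_mem hj, ← compStart_eq_of_succ hj hi hji, compEnd_eq_of_succ hj hi hji]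
    congr 2 <;> omega
  · rw [vJ_of_notMem hj, compStart_eq_self_of_notMem hi hj hji, Nat.sub_self, zero_mul,
      Nat.cast_zero]

lemma vJ_of_succ (hi : i ∈ J) (hij : i.1 + 1 = j.1) :
    vJ n J j = (((i.1 + 2 - compStart n J i) * (compEnd n J i - i.1) : ℕ) : ℝ) := by
  by_cases hj : j ∈ J
  · rw [vJ_of_mem hj, compStart_eq_of_succ hi hj hij, ← compEnd_eq_of_succ hi hj hij]
    congr 2 <;> omega
  · rw [vJ_of_notMem hj, compEnd_eq_self_of_notMem hi hj hij, Nat.sub_self, mul_zero,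
      Nat.cast_zero]

end Vertices

lemma sum_ite_val_eq {M : Type*} [AddCommMonoid M] {m : ℕ} (x : Fin m → M) (c : ℕ) :
    ∑ j : Fin m, (if j.1 = c then x j else 0) = if h : c < m then x ⟨c, h⟩ else 0 := by
  split_ifs with h
  · rw [Finset.sum_eq_single ⟨c, h⟩ (fun j _ hj => if_neg fun hc => hj (Fin.ext hc))
      (fun h' => absurd (Finset.mem_univ _) h'), if_pos rfl]
  · exact Finset.sum_eq_zero fun j _ => if_neg fun hc => h (by rw [← hc]; exact j.2)

lemma negAlphaV_dotProduct {n : ℕ} (i : Fin (n-1)) (x : Fin (n-1) → ℝ) :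
    negAlphaV n i ⬝ᵥ x = (if h : 0 < i.1 then x ⟨i.1 - 1, by omega⟩ else 0) - 2 * x i
      + (if h : i.1 + 1 < n - 1 then x ⟨i.1 + 1, h⟩ else 0) := by
  have hterm : ∀ j, negAlphaV n i j * x j = (if j.1 + 1 = i.1 then x j else 0)
      - 2 * (if j = i then x j else 0) + (if j.1 = i.1 + 1 then x j else 0) := by
    intro j
    unfold negAlphaV
    split_ifs <;> ring
  simp only [dotProduct, hterm, Finset.sum_add_distrib, Finset.sum_sub_distrib, ← Finset.mul_sum,
    Finset.sum_ite_eq', Finset.mem_univ, if_true, sum_ite_val_eq]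
  congr 2
  split_ifs with h
  · have hsum := sum_ite_val_eq x (i.1 - 1)
    rw [dif_pos (by omega)] at hsum
    rw [← hsum]
    exact Finset.sum_congr rfl fun j _ => if_congr (by omega) rfl rfl
  · exact Finset.sum_eq_zero fun j _ => if_neg (by omega)

lemma negAlphaV_dotProduct_vJ {n : ℕ} {J : Set (Fin (n-1))} {i : Fin (n-1)} (hi : i ∈ J) :
    negAlphaV n i ⬝ᵥ vJ n J = -2 := by
  set a := compStart n J i
  set b := compEnd n J i
  have ha := (compStart_spec hi).1
  obtain ⟨hb, hib, -⟩ := compEnd_spec hi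
  have hleft : (if h : 0 < i.1 then vJ n J ⟨i.1 - 1, by omega⟩ else 0) =
      (((i.1 - a) * (b + 2 - i.1) : ℕ) : ℝ) := by
    split_ifs with h
    · exact vJ_of_pred hi (show i.1 - 1 + 1 = i.1 by omega)
    · rw [show i.1 - a = 0 by omega, zero_mul, Nat.cast_zero]
  have hright : (if h : i.1 + 1 < n - 1 then vJ n J ⟨i.1 + 1, h⟩ else 0) =
      (((i.1 + 2 - a) * (b - i.1) : ℕ) : ℝ) := by
    split_ifs with h
    · exact vJ_of_succ hi rfl
    · rw [show b - i.1 = 0 by omega, mul_zero, Nat.cast_zero]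
  rw [negAlphaV_dotProduct, hleft, hright, vJ_of_mem hi]
  obtain ⟨p, hp⟩ : ∃ p, i.1 = a + p := ⟨i.1 - a, by omega⟩
  obtain ⟨q, hq⟩ : ∃ q, b = i.1 + q := ⟨b - i.1, by omega⟩
  rw [show i.1 - a = p by omega, show b + 2 - i.1 = q + 2 by omega,
    show i.1 + 1 - a = p + 1 by omega, show b + 1 - i.1 = q + 1 by omega,
    show i.1 + 2 - a = p + 2 by omega, show b - i.1 = q by omega]
  push_cast
  ring

lemma linearIndependent_vJ_sub {n : ℕ} {ι : Type*} {e : ι → Fin (n-1)}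
    {S S' : ι → Set (Fin (n-1))} (hS : ∀ j, e j ∈ S j) (hS' : ∀ j, e j ∉ S' j)
    (hoff : ∀ j k, j ≠ k → e k ∉ S j ∧ e k ∉ S' j) :
    LinearIndependent ℝ fun j => vJ n (S j) - vJ n (S' j) :=
  linearIndependent_of_apply_ne_zero_of_apply_eq_zero (e := e)
    (fun j => by simpa [vJ_of_notMem (hS' j)] using (vJ_pos (hS j)).ne')
    (fun j k hjk => by simp [vJ_of_notMem (hoff j k hjk).1, vJ_of_notMem (hoff j k hjk).2])

theorem facets_have_dimension (n : ℕ) (i : Fin (n-1)) :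
    Module.finrank ℝ (vectorSpan ℝ (Fplus n i)) = n - 2 ∧
    Module.finrank ℝ (vectorSpan ℝ (Fminus n i)) = n - 2 := by
  have hcard : Fintype.card {j // j ≠ i} + 1 = Module.finrank ℝ (Fin (n-1) → ℝ) := by
    simp only [Fintype.card_subtype_compl, Fintype.card_subtype_eq, Fintype.card_fin,
      Module.finrank_fin_fun]
    have := i.2
    omega
  have hdim : n - 2 = Fintype.card {j // j ≠ i} := by
    rw [Module.finrank_fin_fun] at hcard
    omega
  rw [Fplus, Fminus, vectorSpan_convexHull, vectorSpan_convexHull, hdim]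
  constructor
  · refine finrank_vectorSpan_eq_card_of_linearIndependent
      (f := dotProductEquiv ℝ _ (negAlphaV n i)) (c := -2) ?_ ?_
      (linearIndependent_vJ_sub (e := Subtype.val) (S := fun j => {i, j.1}) (S' := fun _ => {i})
        (by simp) (fun j => j.2) (fun j k hjk => by simp [k.2, Subtype.val_injective.ne hjk.symm]))
      (fun j => ?_) hcard
    · exact (dotProductEquiv ℝ _).map_ne_zero_iff.2 fun h => by
        simpa [negAlphaV] using congrFun h i
    · rintro _ ⟨J, hiJ, rfl⟩
      exact negAlphaV_dotProduct_vJ hiJ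
    · exact vsub_mem_vectorSpan ℝ ⟨{i, j.1}, Set.mem_insert _ _, rfl⟩ ⟨{i}, rfl, rfl⟩
  · refine finrank_vectorSpan_eq_card_of_linearIndependent (f := LinearMap.proj i) (c := 0) ?_ ?_
      (linearIndependent_vJ_sub (e := Subtype.val) (S := fun j => {j.1}) (S' := fun _ => ∅)
        (by simp) (by simp) (fun j k hjk => by simp [Subtype.val_injective.ne hjk.symm]))
      (fun j => ?_) hcard
    · exact fun h => by simpa using LinearMap.congr_fun h (Pi.single i 1)
    · rintro _ ⟨J, hiJ, rfl⟩
      exact vJ_of_notMem hiJ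
    · exact vsub_mem_vectorSpan ℝ ⟨{j.1}, by simpa using j.2.symm, rfl⟩ ⟨∅, id, rfl⟩

end PetersonPaper
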